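/- Let S ⊆ 𝕊 be closed in the pcfb-topology and let K_S be the associated Grothendieck topology on the big cell 𝙳. Then the following are equivalent: (1) every K_S-covering sieve on any object n contains a finitely generated K_S-covering sieve (i.e., one generated by finitely many morphisms); (2) for every positive natural number n, the set {s ∈ S : n ∣ s} is compact in the subspace topology induced by the localic topology on 𝕊. -/

import Mathlib

open Topology

/-- A supernatural number: a function from the set of primes to `ℕ∞ = ℕ ∪ {∞}`,
thought of as the formal product `∏ p ^ (s p)`. -/
def Supernatural : Type := Nat.Primes → ℕ∞

/-- Divisibility of supernatural numbers: `s ∣ t` iff `s p ≤ t p` for every prime `p`. -/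
instance : Dvd Supernatural := ⟨fun s t => ∀ p, s p ≤ t p⟩

/-- The supernatural number associated to a positive natural number,
given by its prime factorization. -/
def natToSuper (n : ℕ+) : Supernatural := fun p => ((n : ℕ).factorization p : ℕ∞)

/-- The localic topology on `𝕊`, generated by the open sets `(n) = {s : n ∣ s}`
for `n` a positive natural number. -/
def localicTopology : TopologicalSpace Supernatural :=
  .generateFrom {U | ∃ n : ℕ+, U = {s | natToSuper n ∣ s}}

attribute [instance] localicTopology

/-- The pcfb-topology on `𝕊`, generated by the sets `{x | n ∣ x ∧ x ∣ s}`
for `n` a positive natural number and `s` a supernatural number. -/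
def pcfbTopology : TopologicalSpace Supernatural :=
  .generateFrom {U | ∃ (n : ℕ+) (t : Supernatural), U = {x | natToSuper n ∣ x ∧ x ∣ t}}

open CategoryTheory

/-- The big cell: the category whose objects are the positive natural numbers, with a
unique morphism `m ⟶ n` whenever `n ∣ m` (the opposite of the divisibility poset). -/
def BigCell : Type := ℕ+

/-- The underlying positive natural number of an object of the big cell. -/
def BigCell.d : BigCell → ℕ+ := fun x => x

/-- The object of the big cell corresponding to a positive natural number. -/
def BigCell.of : ℕ+ → BigCell := fun x => x

/-- `m ≤ n` in the big cell iff `n ∣ m`; the induced category has a unique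
morphism `m ⟶ n` whenever `n ∣ m`. -/
instance : Preorder BigCell where
  le m n := n.d ∣ m.d
  le_refl _ := dvd_refl _
  le_trans _ _ _ hab hbc := dvd_trans hbc hab

/-- The sieve on `n` generated by the finitely many positive natural numbers in `F`:
it contains a multiple `m` of `n` iff `m` is a multiple of some element of `F`.
The finitely generated sieves on `n` are exactly the sieves of this form. -/
def genSieve (n : BigCell) (F : Finset ℕ+) : Sieve n where
  arrows m _ := ∃ m₀ ∈ F, m₀ ∣ m.d
  downward_closed := by
    rintro Y Z f ⟨m₀, hm₀, hdvd⟩ g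
    exact ⟨m₀, hm₀, dvd_trans hdvd (leOfHom g)⟩

/-!
Compactness can be tested on covers by the basic opens `(m)`. A sieve on `n` is a `K_S`-cover
exactly when the sets `(m)` of its arrows cover `S ∩ (n)`, so a finite subcover yields a finitely
generated covering subsieve. Conversely, a cover of `S ∩ (n)` by sets `(m)` generates a covering
sieve, and a finitely generated covering subsieve of it gives a finite subcover because on `(n)` the
set `(m₀)` agrees with `(lcm n m₀)`.
-/

namespace Supernatural

protected lemma dvd_trans {a b c : Supernatural} (hab : a ∣ b) (hbc : b ∣ c) : a ∣ c :=
  fun p => (hab p).trans (hbc p)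

/-- The basic open set `(n)` of the localic topology. -/
def multiples (n : ℕ+) : Set Supernatural := {s | natToSuper n ∣ s}

lemma isOpen_multiples (n : ℕ+) : IsOpen (multiples n) :=
  .basic _ ⟨n, rfl⟩

end Supernatural

open Supernatural

lemma natToSuper_dvd_natToSuper {m n : ℕ+} (h : m ∣ n) : natToSuper m ∣ natToSuper n :=
    fun p => by
  have := (Nat.factorization_le_iff_dvd m.ne_zero n.ne_zero).mpr (PNat.dvd_iff.mp h)
  change ((m : ℕ).factorization p : ℕ∞) ≤ (n : ℕ).factorization p
  exact_mod_cast this p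

lemma natToSuper_lcm_dvd_iff {a b : ℕ+} {s : Supernatural} :
    natToSuper (PNat.lcm a b) ∣ s ↔ natToSuper a ∣ s ∧ natToSuper b ∣ s := by
  refine ⟨fun h => ⟨?_, ?_⟩, fun ⟨ha, hb⟩ p => ?_⟩
  · exact Supernatural.dvd_trans (natToSuper_dvd_natToSuper (PNat.dvd_lcm_left a b)) h
  · exact Supernatural.dvd_trans (natToSuper_dvd_natToSuper (PNat.dvd_lcm_right a b)) h
  have hlcm : (PNat.lcm a b : ℕ).factorization p
      = max ((a : ℕ).factorization p) ((b : ℕ).factorization p) := by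
    rw [PNat.lcm_coe, Nat.factorization_lcm a.ne_zero b.ne_zero, Finsupp.sup_apply]
  change ((PNat.lcm a b : ℕ).factorization p : ℕ∞) ≤ s p
  rw [hlcm, Nat.mono_cast.map_max]
  exact max_le (ha p) (hb p)

lemma isCompact_iff_finite_subcover_multiples {K : Set Supernatural} :
    IsCompact K ↔ ∀ M : Set ℕ+, K ⊆ ⋃ m ∈ M, multiples m →
      ∃ F ⊆ M, F.Finite ∧ K ⊆ ⋃ m ∈ F, multiples m := by
  refine ⟨fun hK M hM => hK.elim_finite_subcover_image (fun m _ => isOpen_multiples m) hM,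
    fun h => isCompact_generateFrom rfl fun P hP hKP => ?_⟩
  obtain ⟨F, hFM, hF, hKF⟩ := h {m | multiples m ∈ P} fun s hs => by
    obtain ⟨U, hUP, hsU⟩ := hKP hs
    obtain ⟨m, rfl⟩ := hP hUP
    exact Set.mem_biUnion (x := m) hUP hsU
  refine ⟨multiples '' F, Set.image_subset_iff.mpr hFM, hF.image _, ?_⟩
  rwa [Set.sUnion_image]

def dvdSieve (n : BigCell) (M : Set ℕ+) : Sieve n where
  arrows m _ := ∃ m₀ ∈ M, m₀ ∣ m.d
  downward_closed := by
    rintro Y Z f ⟨m₀, hm₀, hdvd⟩ g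
    exact ⟨m₀, hm₀, dvd_trans hdvd (leOfHom g)⟩

lemma genSieve_eq_dvdSieve (n : BigCell) (F : Finset ℕ+) : genSieve n F = dvdSieve n F := rfl

section Covering

variable {S : Set Supernatural} {J : GrothendieckTopology BigCell}
  (hJ : ∀ (n : BigCell) (L : Sieve n),
    L ∈ J.sieves n ↔ ∀ s ∈ S, natToSuper n.d ∣ s →
      ∃ (m : BigCell) (f : m ⟶ n), L.arrows f ∧ natToSuper m.d ∣ s)
include hJ

lemma dvdSieve_mem_sieves_iff (n : BigCell) (M : Set ℕ+) :
    dvdSieve n M ∈ J.sieves n ↔ S ∩ multiples n.d ⊆ ⋃ m ∈ M, multiples m := by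
  rw [hJ]
  constructor
  · rintro h s ⟨hs, hns⟩
    obtain ⟨m, -, ⟨m₀, hm₀, hm₀m⟩, hms⟩ := h s hs hns
    exact Set.mem_biUnion hm₀
      (Supernatural.dvd_trans (natToSuper_dvd_natToSuper hm₀m) hms)
  · intro h s hs hns
    obtain ⟨m₀, hm₀, hm₀s⟩ := Set.mem_iUnion₂.mp (h ⟨hs, hns⟩)
    exact ⟨BigCell.of (PNat.lcm n.d m₀), homOfLE (PNat.dvd_lcm_left n.d m₀),
      ⟨m₀, hm₀, PNat.dvd_lcm_right n.d m₀⟩, natToSuper_lcm_dvd_iff.mpr ⟨hns, hm₀s⟩⟩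

lemma exists_genSieve_of_isCompact {n : BigCell} (hK : IsCompact (S ∩ multiples n.d))
    {L : Sieve n} (hL : L ∈ J.sieves n) :
    ∃ F : Finset ℕ+, genSieve n F ≤ L ∧ genSieve n F ∈ J.sieves n := by
  obtain ⟨F, hFL, hF, hKF⟩ := isCompact_iff_finite_subcover_multiples.mp hK
    {m | ∃ f : BigCell.of m ⟶ n, L.arrows f} fun s ⟨hs, hns⟩ => by
      obtain ⟨m, f, hf, hms⟩ := (hJ n L).mp hL s hs hns
      exact Set.mem_biUnion (x := m.d) ⟨f, hf⟩ hms
  refine ⟨hF.toFinset, fun m g ⟨m₀, hm₀, hm₀m⟩ => ?_, ?_⟩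
  · obtain ⟨f, hf⟩ := hFL (hF.mem_toFinset.mp hm₀)
    simpa only [Subsingleton.elim (homOfLE hm₀m ≫ f) g] using
      L.downward_closed hf (homOfLE hm₀m : m ⟶ BigCell.of m₀)
  · rwa [genSieve_eq_dvdSieve, dvdSieve_mem_sieves_iff hJ, hF.coe_toFinset]

lemma isCompact_of_exists_genSieve {n : ℕ+}
    (h : ∀ L : Sieve (BigCell.of n), L ∈ J.sieves (BigCell.of n) →
      ∃ F : Finset ℕ+, genSieve _ F ≤ L ∧ genSieve _ F ∈ J.sieves (BigCell.of n)) :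
    IsCompact (S ∩ multiples n) := by
  refine isCompact_iff_finite_subcover_multiples.mpr fun M hM => ?_
  obtain ⟨F, hFM, hFJ⟩ := h _ ((dvdSieve_mem_sieves_iff hJ _ M).mpr hM)
  -- on `(n)`, the set `(m₀)` of a generator `m₀ ∈ F` is `(lcm n m₀)`, inside some `(m)`, `m ∈ M`
  have hlift : ∀ m₀ ∈ F, ∃ m ∈ M, m ∣ PNat.lcm n m₀ := fun m₀ hm₀ =>
    hFM (homOfLE (PNat.dvd_lcm_left n m₀) : BigCell.of (PNat.lcm n m₀) ⟶ _)
      ⟨m₀, hm₀, PNat.dvd_lcm_right n m₀⟩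
  choose g hgM hg using hlift
  refine ⟨Set.range fun m₀ : F => g m₀ m₀.2, Set.range_subset_iff.mpr fun m₀ => hgM _ _,
    Set.finite_range _, fun s ⟨hs, hns⟩ => ?_⟩
  obtain ⟨m₀, hm₀, hm₀s⟩ := Set.mem_iUnion₂.mp
    (((genSieve_eq_dvdSieve _ F ▸ dvdSieve_mem_sieves_iff hJ _ _).mp hFJ) ⟨hs, hns⟩)
  exact Set.mem_biUnion ⟨⟨m₀, hm₀⟩, rfl⟩ (Supernatural.dvd_trans
    (natToSuper_dvd_natToSuper (hg m₀ hm₀)) (natToSuper_lcm_dvd_iff.mpr ⟨hns, hm₀s⟩))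

end Covering

theorem stmt11_general (S : Set Supernatural)
    (J : GrothendieckTopology BigCell)
    (hJ : ∀ (n : BigCell) (L : Sieve n),
      L ∈ J.sieves n ↔ ∀ s ∈ S, natToSuper n.d ∣ s →
        ∃ (m : BigCell) (f : m ⟶ n), L.arrows f ∧ natToSuper m.d ∣ s) :
    (∀ (n : BigCell) (L : Sieve n), L ∈ J.sieves n →
        ∃ F : Finset ℕ+, genSieve n F ≤ L ∧ genSieve n F ∈ J.sieves n) ↔
      ∀ n : ℕ+, IsCompact {x : S | natToSuper n ∣ (x : Supernatural)} := by
  have hK (n : ℕ+) : IsCompact {x : S | natToSuper n ∣ (x : Supernatural)} ↔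
      IsCompact (S ∩ multiples n) := by
    rw [Subtype.isCompact_iff, ← Subtype.image_preimage_coe]
    rfl
  simp only [hK]
  exact ⟨fun h n => isCompact_of_exists_genSieve hJ (h _),
    fun h n _ hL => exists_genSieve_of_isCompact hJ (h n.d) hL⟩

theorem stmt11 (S : Set Supernatural) (hS : IsClosed[pcfbTopology] S)
    (J : GrothendieckTopology BigCell)
    (hJ : ∀ (n : BigCell) (L : Sieve n),
      L ∈ J.sieves n ↔ ∀ s ∈ S, natToSuper n.d ∣ s →
        ∃ (m : BigCell) (f : m ⟶ n), L.arrows f ∧ natToSuper m.d ∣ s) :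
    (∀ (n : BigCell) (L : Sieve n), L ∈ J.sieves n →
        ∃ F : Finset ℕ+, genSieve n F ≤ L ∧ genSieve n F ∈ J.sieves n) ↔
      ∀ n : ℕ+, IsCompact {x : S | natToSuper n ∣ (x : Supernatural)} :=
  stmt11_general S J hJ
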